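/- arXiv:1207.4511 — 4 statements merged into one kernel-verified Lean document; each statement's English description precedes it below -/
import Mathlib

section
/- If a Banach algebra A is pseudo-amenable and B is a quotient of A by a closed two-sided ideal J, then A/J is pseudo-amenable. -/
open Filter Topology TensorProduct

noncomputable section


open Filter Topology TensorProduct


/-! Banach bimodules and derivations -/

variable (A : Type) [NonUnitalNormedRing A] [NormedSpace ℂ A]
  [IsScalarTower ℂ A A] [SMulCommClass ℂ A A]

/-- A Banach `A`-bimodule structure on a Banach space `X`: `l a` is the left action of `a`,
`r a` is the right action of `a`. -/
structure BanachBimod (X : Type) [NormedAddCommGroup X] [NormedSpace ℂ X] where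
  l : A → X →L[ℂ] X
  r : A → X →L[ℂ] X
  l_add : ∀ a b, l (a + b) = l a + l b
  l_smul : ∀ (c : ℂ) a, l (c • a) = c • l a
  r_add : ∀ a b, r (a + b) = r a + r b
  r_smul : ∀ (c : ℂ) a, r (c • a) = c • r a
  l_bound : ∃ C : ℝ, ∀ a, ‖l a‖ ≤ C * ‖a‖
  r_bound : ∃ C : ℝ, ∀ a, ‖r a‖ ≤ C * ‖a‖
  l_mul : ∀ a b, l (a * b) = (l a).comp (l b)
  r_mul : ∀ a b, r (a * b) = (r b).comp (r a)
  lr_comm : ∀ a b, (l a).comp (r b) = (r b).comp (l a)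

variable {A}

namespace BanachBimod

variable {X : Type} [NormedAddCommGroup X] [NormedSpace ℂ X]

/-- The dual bimodule structure on `X →L[ℂ] ℂ`. -/
def dual (M : BanachBimod A X) : BanachBimod A (X →L[ℂ] ℂ) where
  l a := (ContinuousLinearMap.compL ℂ X X ℂ).flip (M.r a)
  r a := (ContinuousLinearMap.compL ℂ X X ℂ).flip (M.l a)
  l_add a b := by simp only [M.r_add, map_add]
  l_smul c a := by simp only [M.r_smul, map_smul]
  r_add a b := by simp only [M.l_add, map_add]
  r_smul c a := by simp only [M.l_smul, map_smul]
  l_bound := by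
    obtain ⟨C, hC⟩ := M.r_bound
    refine ⟨‖(ContinuousLinearMap.compL ℂ X X ℂ).flip‖ * C, fun a => ?_⟩
    calc ‖(ContinuousLinearMap.compL ℂ X X ℂ).flip (M.r a)‖
        ≤ ‖(ContinuousLinearMap.compL ℂ X X ℂ).flip‖ * ‖M.r a‖ :=
          (ContinuousLinearMap.compL ℂ X X ℂ).flip.le_opNorm _
      _ ≤ ‖(ContinuousLinearMap.compL ℂ X X ℂ).flip‖ * (C * ‖a‖) := by
          exact mul_le_mul_of_nonneg_left (hC a) (norm_nonneg _)
      _ = ‖(ContinuousLinearMap.compL ℂ X X ℂ).flip‖ * C * ‖a‖ := by ring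
  r_bound := by
    obtain ⟨C, hC⟩ := M.l_bound
    refine ⟨‖(ContinuousLinearMap.compL ℂ X X ℂ).flip‖ * C, fun a => ?_⟩
    calc ‖(ContinuousLinearMap.compL ℂ X X ℂ).flip (M.l a)‖
        ≤ ‖(ContinuousLinearMap.compL ℂ X X ℂ).flip‖ * ‖M.l a‖ :=
          (ContinuousLinearMap.compL ℂ X X ℂ).flip.le_opNorm _
      _ ≤ ‖(ContinuousLinearMap.compL ℂ X X ℂ).flip‖ * (C * ‖a‖) := by
          exact mul_le_mul_of_nonneg_left (hC a) (norm_nonneg _)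
      _ = ‖(ContinuousLinearMap.compL ℂ X X ℂ).flip‖ * C * ‖a‖ := by ring
  l_mul a b := by
    ext φ x
    simp [M.r_mul]
  r_mul a b := by
    ext φ x
    simp [M.l_mul]
  lr_comm a b := by
    ext φ x
    simpa using congrArg φ (congrFun (congrArg DFunLike.coe (M.lr_comm b a)) x)

/-- A continuous derivation from `A` into the bimodule `X`. -/
def IsDerivation (M : BanachBimod A X) (D : A →L[ℂ] X) : Prop :=
  ∀ a b, D (a * b) = M.l a (D b) + M.r b (D a)

/-- `D` is inner. -/
def Inner (M : BanachBimod A X) (D : A →L[ℂ] X) : Prop :=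
  ∃ x : X, ∀ a, D a = M.l a x - M.r a x

/-- `D` is approximately inner: some net of inner derivations converges to `D` pointwise
in norm. -/
def ApproxInner (M : BanachBimod A X) (D : A →L[ℂ] X) : Prop :=
  ∃ (ι : Type) (φ : Filter ι) (x : ι → X), φ.NeBot ∧
    ∀ a, Tendsto (fun i => M.l a (x i) - M.r a (x i)) φ (𝓝 (D a))

/-- `D` is sequentially approximately inner. -/
def SeqApproxInner (M : BanachBimod A X) (D : A →L[ℂ] X) : Prop :=
  ∃ x : ℕ → X, ∀ a, Tendsto (fun n => M.l a (x n) - M.r a (x n)) atTop (𝓝 (D a))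

/-- `D` is boundedly approximately inner: the approximating net of inner derivations is
bounded as a net of operators from `A` to `X`. -/
def BddApproxInner (M : BanachBimod A X) (D : A →L[ℂ] X) : Prop :=
  ∃ (ι : Type) (φ : Filter ι) (x : ι → X), φ.NeBot ∧
    (∃ C : ℝ, ∀ i a, ‖M.l a (x i) - M.r a (x i)‖ ≤ C * ‖a‖) ∧
    ∀ a, Tendsto (fun i => M.l a (x i) - M.r a (x i)) φ (𝓝 (D a))

/-- `D` is uniformly approximately inner: inner derivations approximate `D` uniformly
on the unit ball of `A`, i.e. in operator norm. -/
def UnifApproxInner (M : BanachBimod A X) (D : A →L[ℂ] X) : Prop :=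
  ∃ (ι : Type) (φ : Filter ι) (x : ι → X), φ.NeBot ∧
    ∀ ε > (0 : ℝ), ∀ᶠ i in φ, ∀ a, ‖D a - (M.l a (x i) - M.r a (x i))‖ ≤ ε * ‖a‖

/-- A derivation into the dual module `X →L[ℂ] ℂ` is weak* approximately inner. -/
def WeakStarApproxInner (M : BanachBimod A X) (D : A →L[ℂ] (X →L[ℂ] ℂ)) : Prop :=
  ∃ (ι : Type) (φ : Filter ι) (x : ι → (X →L[ℂ] ℂ)), φ.NeBot ∧
    ∀ (a : A) (ξ : X),
      Tendsto (fun i => (M.dual.l a (x i) - M.dual.r a (x i)) ξ) φ (𝓝 (D a ξ))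

end BanachBimod

variable (A)

/-- `A` is contractible: every continuous derivation into every Banach `A`-bimodule is inner. -/
def Contractible : Prop :=
  ∀ (X : Type) (_ : NormedAddCommGroup X) (_ : NormedSpace ℂ X) (M : BanachBimod A X)
    (D : A →L[ℂ] X), M.IsDerivation D → M.Inner D

def ApproximatelyContractible : Prop :=
  ∀ (X : Type) (_ : NormedAddCommGroup X) (_ : NormedSpace ℂ X) (M : BanachBimod A X)
    (D : A →L[ℂ] X), M.IsDerivation D → M.ApproxInner D

def SeqApproximatelyContractible : Prop :=
  ∀ (X : Type) (_ : NormedAddCommGroup X) (_ : NormedSpace ℂ X) (M : BanachBimod A X)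
    (D : A →L[ℂ] X), M.IsDerivation D → M.SeqApproxInner D

def UnifApproximatelyContractible : Prop :=
  ∀ (X : Type) (_ : NormedAddCommGroup X) (_ : NormedSpace ℂ X) (M : BanachBimod A X)
    (D : A →L[ℂ] X), M.IsDerivation D → M.UnifApproxInner D

def ApproximatelyAmenable : Prop :=
  ∀ (X : Type) (_ : NormedAddCommGroup X) (_ : NormedSpace ℂ X) (M : BanachBimod A X)
    (D : A →L[ℂ] (X →L[ℂ] ℂ)), M.dual.IsDerivation D → M.dual.ApproxInner D

def SeqApproximatelyAmenable : Prop :=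
  ∀ (X : Type) (_ : NormedAddCommGroup X) (_ : NormedSpace ℂ X) (M : BanachBimod A X)
    (D : A →L[ℂ] (X →L[ℂ] ℂ)), M.dual.IsDerivation D → M.dual.SeqApproxInner D

def BddApproximatelyAmenable : Prop :=
  ∀ (X : Type) (_ : NormedAddCommGroup X) (_ : NormedSpace ℂ X) (M : BanachBimod A X)
    (D : A →L[ℂ] (X →L[ℂ] ℂ)), M.dual.IsDerivation D → M.dual.BddApproxInner D

def WeakStarApproximatelyAmenable : Prop :=
  ∀ (X : Type) (_ : NormedAddCommGroup X) (_ : NormedSpace ℂ X) (M : BanachBimod A X)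
    (D : A →L[ℂ] (X →L[ℂ] ℂ)), M.dual.IsDerivation D → M.WeakStarApproxInner D


/-- The projective tensor "seminorm" on the algebraic tensor product `V ⊗[ℂ] W`, relative to
given (semi)norm functions on the factors: the infimum of `∑ να aₙ * νβ bₙ` over all
representations `t = ∑ aₙ ⊗ bₙ`. -/
def projTensorSN {V W : Type} [AddCommGroup V] [Module ℂ V] [AddCommGroup W] [Module ℂ W]
    (να : V → ℝ) (νβ : W → ℝ) (t : V ⊗[ℂ] W) : ℝ :=
  sInf {r : ℝ | ∃ L : List (V × W), t = (L.map fun p => p.1 ⊗ₜ[ℂ] p.2).sum ∧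
      r = (L.map fun p => να p.1 * νβ p.2).sum}

section SN

variable (C : Type) [NonUnitalRing C] [Module ℂ C] [IsScalarTower ℂ C C] [SMulCommClass ℂ C C]

/-- The left action `u ↦ a·u` of `C` on `C ⊗[ℂ] C`. -/
def tactL (a : C) : C ⊗[ℂ] C →ₗ[ℂ] C ⊗[ℂ] C :=
  TensorProduct.map (LinearMap.mulLeft ℂ a) LinearMap.id

/-- The right action `u ↦ u·a` of `C` on `C ⊗[ℂ] C`. -/
def tactR (a : C) : C ⊗[ℂ] C →ₗ[ℂ] C ⊗[ℂ] C :=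
  TensorProduct.map LinearMap.id (LinearMap.mulRight ℂ a)

/-- The multiplication map `π : C ⊗ C → C`. -/
def tpi : C ⊗[ℂ] C →ₗ[ℂ] C := LinearMap.mul' ℂ C

variable (ν : C → ℝ)

/-- Pseudo-amenability of the algebra `C` relative to the (semi)norm function `ν`:
there is an approximate diagonal, i.e. a net `(u_i) ⊂ C ⊗̂ C` with
`a·u_i − u_i·a → 0` (in the projective tensor seminorm) and `π(u_i)a → a` for all `a ∈ C`. -/
def PseudoAmenableSN : Prop :=
  ∃ (ι : Type) (φ : Filter ι) (u : ι → C ⊗[ℂ] C), φ.NeBot ∧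
    (∀ a : C, Tendsto (fun i => projTensorSN ν ν (tactL C a (u i) - tactR C a (u i))) φ (𝓝 0)) ∧
    (∀ a : C, Tendsto (fun i => ν (tpi C (u i) * a - a)) φ (𝓝 0))

/-- Sequential pseudo-amenability. -/
def SeqPseudoAmenableSN : Prop :=
  ∃ u : ℕ → C ⊗[ℂ] C,
    (∀ a : C, Tendsto (fun n => projTensorSN ν ν (tactL C a (u n) - tactR C a (u n))) atTop (𝓝 0)) ∧
    (∀ a : C, Tendsto (fun n => ν (tpi C (u n) * a - a)) atTop (𝓝 0))

/-- Pseudo-contractibility: there is a central approximate diagonal. -/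
def PseudoContractibleSN : Prop :=
  ∃ (ι : Type) (φ : Filter ι) (u : ι → C ⊗[ℂ] C), φ.NeBot ∧
    (∀ (a : C) i, tactL C a (u i) = tactR C a (u i)) ∧
    (∀ a : C, Tendsto (fun i => ν (tpi C (u i) * a - a)) φ (𝓝 0))

/-- Bounded pseudo-contractibility: a central approximate diagonal `(u_i)` such that
`(π(u_i))` is a multiplier-bounded approximate identity. -/
def BddPseudoContractibleSN : Prop :=
  ∃ (ι : Type) (φ : Filter ι) (u : ι → C ⊗[ℂ] C), φ.NeBot ∧
    (∀ (a : C) i, tactL C a (u i) = tactR C a (u i)) ∧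
    (∀ a : C, Tendsto (fun i => ν (tpi C (u i) * a - a)) φ (𝓝 0)) ∧
    (∃ K : ℝ, 0 < K ∧ ∀ i (a : C), ν (tpi C (u i) * a) ≤ K * ν a)

end SN

section Normed

variable (A : Type) [NonUnitalNormedRing A] [NormedSpace ℂ A]
  [IsScalarTower ℂ A A] [SMulCommClass ℂ A A]

def PseudoAmenable : Prop := PseudoAmenableSN A (fun a => ‖a‖)
def SeqPseudoAmenable : Prop := SeqPseudoAmenableSN A (fun a => ‖a‖)
def PseudoContractible : Prop := PseudoContractibleSN A (fun a => ‖a‖)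
def BddPseudoContractible : Prop := BddPseudoContractibleSN A (fun a => ‖a‖)

/-- `A` has a (two-sided) approximate identity. -/
def HasApproxIdentity : Prop :=
  ∃ (ι : Type) (φ : Filter ι) (e : ι → A), φ.NeBot ∧
    ∀ a : A, Tendsto (fun i => e i * a) φ (𝓝 a) ∧ Tendsto (fun i => a * e i) φ (𝓝 a)

/-- `A` has a bounded (two-sided) approximate identity. -/
def HasBoundedApproxIdentity : Prop :=
  ∃ (ι : Type) (φ : Filter ι) (e : ι → A), φ.NeBot ∧ (∃ C : ℝ, ∀ i, ‖e i‖ ≤ C) ∧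
    ∀ a : A, Tendsto (fun i => e i * a) φ (𝓝 a) ∧ Tendsto (fun i => a * e i) φ (𝓝 a)

/-- `A` has a left approximate identity. -/
def HasLeftApproxIdentity : Prop :=
  ∃ (ι : Type) (φ : Filter ι) (e : ι → A), φ.NeBot ∧
    ∀ a : A, Tendsto (fun i => e i * a) φ (𝓝 a)

/-- `A` has a right approximate identity. -/
def HasRightApproxIdentity : Prop :=
  ∃ (ι : Type) (φ : Filter ι) (e : ι → A), φ.NeBot ∧
    ∀ a : A, Tendsto (fun i => a * e i) φ (𝓝 a)

/-- `A` has a central approximate identity. -/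
def HasCentralApproxIdentity : Prop :=
  ∃ (ι : Type) (φ : Filter ι) (e : ι → A), φ.NeBot ∧
    (∀ (a : A) i, a * e i = e i * a) ∧
    ∀ a : A, Tendsto (fun i => e i * a) φ (𝓝 a)

/-- `A` is approximately biprojective: there is a net `(T_α)` of bounded `A`-bimodule morphisms
`A → A ⊗̂ A` with `π ∘ T_α (a) → a` for every `a`. -/
def ApproxBiprojective : Prop :=
  ∃ (ι : Type) (φ : Filter ι) (T : ι → (A →ₗ[ℂ] A ⊗[ℂ] A)), φ.NeBot ∧
    (∀ i, ∃ C : ℝ, ∀ a, projTensorSN (fun x : A => ‖x‖) (fun x : A => ‖x‖) (T i a) ≤ C * ‖a‖) ∧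
    (∀ i (a b : A), T i (a * b) = tactL A a (T i b) ∧ T i (a * b) = tactR A b (T i a)) ∧
    (∀ a : A, Tendsto (fun i => tpi A (T i a)) φ (𝓝 a))

end Normed


end


section Aux

variable {A B : Type} [NonUnitalNormedRing A] [NormedSpace ℂ A]
  [IsScalarTower ℂ A A] [SMulCommClass ℂ A A]
  [NonUnitalNormedRing B] [NormedSpace ℂ B]
  [IsScalarTower ℂ B B] [SMulCommClass ℂ B B]

lemma exists_rep_aux (t : A ⊗[ℂ] A) :
    ∃ L : List (A × A), t = (L.map fun p => p.1 ⊗ₜ[ℂ] p.2).sum := by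
  induction t using TensorProduct.induction_on with
  | zero => exact ⟨[], by simp⟩
  | tmul a b => exact ⟨[(a, b)], by simp⟩
  | add x y hx hy =>
    obtain ⟨L1, h1⟩ := hx
    obtain ⟨L2, h2⟩ := hy
    exact ⟨L1 ++ L2, by simp [h1, h2]⟩

lemma cost_nonneg_aux (L : List (A × A)) :
    0 ≤ (L.map fun p => ‖p.1‖ * ‖p.2‖).sum := by
  apply List.sum_nonneg
  intro x hx
  obtain ⟨p, -, rfl⟩ := List.mem_map.mp hx
  positivity

lemma projTensorSN_bddBelow_aux (t : A ⊗[ℂ] A) :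
    BddBelow {r : ℝ | ∃ L : List (A × A), t = (L.map fun p => p.1 ⊗ₜ[ℂ] p.2).sum ∧
      r = (L.map fun p => ‖p.1‖ * ‖p.2‖).sum} := by
  refine ⟨0, ?_⟩
  rintro r ⟨L, -, rfl⟩
  exact cost_nonneg_aux L

lemma projTensorSN_nonneg_aux (t : A ⊗[ℂ] A) :
    0 ≤ projTensorSN (fun x : A => ‖x‖) (fun x : A => ‖x‖) t := by
  apply Real.sInf_nonneg
  rintro r ⟨L, -, rfl⟩
  exact cost_nonneg_aux L

lemma projTensorSN_map_le_aux (f : A →ₗ[ℂ] B) (C : ℝ) (hC : 0 ≤ C)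
    (hb : ∀ a, ‖f a‖ ≤ C * ‖a‖) (L : List (A × A)) :
    projTensorSN (fun x : B => ‖x‖) (fun x : B => ‖x‖)
      (TensorProduct.map f f ((L.map fun p => p.1 ⊗ₜ[ℂ] p.2).sum))
      ≤ C * C * (L.map fun p => ‖p.1‖ * ‖p.2‖).sum := by
  have h1 : projTensorSN (fun x : B => ‖x‖) (fun x : B => ‖x‖)
      (TensorProduct.map f f ((L.map fun p => p.1 ⊗ₜ[ℂ] p.2).sum))
      ≤ ((L.map fun p => (f p.1, f p.2)).map fun p => ‖p.1‖ * ‖p.2‖).sum := by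
    refine csInf_le (projTensorSN_bddBelow_aux _) ⟨L.map fun p => (f p.1, f p.2), ?_, rfl⟩
    rw [map_list_sum]
    simp [List.map_map, Function.comp_def]
  refine h1.trans ?_
  rw [List.map_map]
  have h2 : ∀ p ∈ L, ((fun p : B × B => ‖p.1‖ * ‖p.2‖) ∘ fun p : A × A => (f p.1, f p.2)) p
      ≤ C * C * (‖p.1‖ * ‖p.2‖) := by
    intro p _
    have := mul_le_mul (hb p.1) (hb p.2) (norm_nonneg _) (by positivity)
    calc ‖f p.1‖ * ‖f p.2‖ ≤ (C * ‖p.1‖) * (C * ‖p.2‖) := this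
      _ = C * C * (‖p.1‖ * ‖p.2‖) := by ring
  calc (L.map _).sum ≤ (L.map fun p => C * C * (‖p.1‖ * ‖p.2‖)).sum := List.sum_le_sum h2
    _ = C * C * (L.map fun p => ‖p.1‖ * ‖p.2‖).sum := by
        rw [← List.sum_map_mul_left]

lemma tendsto_projTensorSN_map_aux {ι : Type} {φ : Filter ι} (f : A →ₗ[ℂ] B) (C : ℝ)
    (hC : 0 ≤ C) (hb : ∀ a, ‖f a‖ ≤ C * ‖a‖) (w : ι → A ⊗[ℂ] A)
    (h : Tendsto (fun i => projTensorSN (fun x : A => ‖x‖) (fun x : A => ‖x‖) (w i)) φ (𝓝 0)) :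
    Tendsto (fun i => projTensorSN (fun x : B => ‖x‖) (fun x : B => ‖x‖)
      (TensorProduct.map f f (w i))) φ (𝓝 0) := by
  rw [Metric.tendsto_nhds] at h ⊢
  intro ε hε
  have hδ : 0 < ε / (C * C + 1) := by positivity
  filter_upwards [h _ hδ] with i hi
  rw [Real.dist_eq, sub_zero] at hi ⊢
  have hlt : projTensorSN (fun x : A => ‖x‖) (fun x : A => ‖x‖) (w i) < ε / (C * C + 1) :=
    lt_of_abs_lt hi
  obtain ⟨L0, hL0⟩ := exists_rep_aux (w i)
  have hne : {r : ℝ | ∃ L : List (A × A), w i = (L.map fun p => p.1 ⊗ₜ[ℂ] p.2).sum ∧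
      r = (L.map fun p => ‖p.1‖ * ‖p.2‖).sum}.Nonempty := ⟨_, L0, hL0, rfl⟩
  obtain ⟨r, ⟨L, hL, rfl⟩, hr⟩ := exists_lt_of_csInf_lt hne hlt
  have hr0 : 0 ≤ (L.map fun p => ‖p.1‖ * ‖p.2‖).sum := cost_nonneg_aux L
  have hle : projTensorSN (fun x : B => ‖x‖) (fun x : B => ‖x‖)
      (TensorProduct.map f f (w i)) ≤ C * C * (L.map fun p => ‖p.1‖ * ‖p.2‖).sum := by
    rw [hL]; exact projTensorSN_map_le_aux f C hC hb L
  have habs : |projTensorSN (fun x : B => ‖x‖) (fun x : B => ‖x‖)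
      (TensorProduct.map f f (w i))| = projTensorSN (fun x : B => ‖x‖) (fun x : B => ‖x‖)
      (TensorProduct.map f f (w i)) := abs_of_nonneg (projTensorSN_nonneg_aux _)
  rw [habs]
  calc projTensorSN (fun x : B => ‖x‖) (fun x : B => ‖x‖) (TensorProduct.map f f (w i))
      ≤ C * C * (L.map fun p => ‖p.1‖ * ‖p.2‖).sum := hle
    _ ≤ (C * C + 1) * (L.map fun p => ‖p.1‖ * ‖p.2‖).sum := by nlinarith
    _ < (C * C + 1) * (ε / (C * C + 1)) := by
        apply mul_lt_mul_of_pos_left hr (by positivity)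
    _ = ε := by field_simp

lemma map_tactL_aux (f : A →ₗ[ℂ] B) (hmul : ∀ x y : A, f (x * y) = f x * f y)
    (a : A) (u : A ⊗[ℂ] A) :
    TensorProduct.map f f (tactL A a u) = tactL B (f a) (TensorProduct.map f f u) := by
  induction u using TensorProduct.induction_on with
  | zero => simp
  | tmul x y => simp [tactL, hmul]
  | add x y hx hy => rw [map_add, map_add, map_add, map_add, hx, hy]

lemma map_tactR_aux (f : A →ₗ[ℂ] B) (hmul : ∀ x y : A, f (x * y) = f x * f y)
    (a : A) (u : A ⊗[ℂ] A) :
    TensorProduct.map f f (tactR A a u) = tactR B (f a) (TensorProduct.map f f u) := by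
  induction u using TensorProduct.induction_on with
  | zero => simp
  | tmul x y => simp [tactR, hmul]
  | add x y hx hy => rw [map_add, map_add, map_add, map_add, hx, hy]

lemma map_tpi_aux (f : A →ₗ[ℂ] B) (hmul : ∀ x y : A, f (x * y) = f x * f y)
    (u : A ⊗[ℂ] A) :
    tpi B (TensorProduct.map f f u) = f (tpi A u) := by
  induction u using TensorProduct.induction_on with
  | zero => simp
  | tmul x y => simp [tpi, hmul]
  | add x y hx hy => rw [map_add, map_add, map_add, hx, hy, ← map_add]

end Aux

/-- If `A` is pseudo-amenable and `B = A/J` is the quotient of `A` by a closed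
two-sided ideal `J` (realized by a continuous surjective homomorphism `q : A → B` with kernel
`J` inducing the quotient norm), then `A/J` is pseudo-amenable. -/
theorem pseudoAmenable_quotient
    (A B : Type) [NonUnitalNormedRing A] [NormedSpace ℂ A]
    [IsScalarTower ℂ A A] [SMulCommClass ℂ A A] [CompleteSpace A]
    [NonUnitalNormedRing B] [NormedSpace ℂ B]
    [IsScalarTower ℂ B B] [SMulCommClass ℂ B B] [CompleteSpace B]
    (J : Submodule ℂ A) (hJc : IsClosed (J : Set A))
    (hJl : ∀ a x : A, x ∈ J → a * x ∈ J) (hJr : ∀ a x : A, x ∈ J → x * a ∈ J)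
    (q : A →ₙₐ[ℂ] B) (hcont : Continuous q) (hsurj : Function.Surjective q)
    (hker : ∀ a : A, q a = 0 ↔ a ∈ J)
    (hnorm : ∀ b : B, ∀ ε > (0 : ℝ), ∃ a : A, q a = b ∧ ‖a‖ < ‖b‖ + ε)
    (hA : PseudoAmenable A) : PseudoAmenable B := by
  obtain ⟨ι, φ, u, hφ, hdiag, hpi⟩ := hA
  set f : A →ₗ[ℂ] B :=
    { toFun := ⇑q, map_add' := fun x y => map_add q x y,
      map_smul' := fun c x => map_smul q c x } with hf
  have hfq : ∀ x : A, f x = q x := fun _ => rfl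
  have hmul : ∀ x y : A, f (x * y) = f x * f y := fun x y => map_mul q x y
  set Q : A →L[ℂ] B := ⟨f, hcont⟩ with hQ
  have hQb : ∀ a : A, ‖f a‖ ≤ ‖Q‖ * ‖a‖ := fun a => Q.le_opNorm a
  refine ⟨ι, φ, fun i => TensorProduct.map f f (u i), hφ, ?_, ?_⟩
  · intro b
    obtain ⟨a, rfl⟩ := hsurj b
    have key := tendsto_projTensorSN_map_aux (B := B) f ‖Q‖ (norm_nonneg Q)
      hQb (fun i => tactL A a (u i) - tactR A a (u i)) (hdiag a)
    convert key using 2 with i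
    rw [map_sub, map_tactL_aux f hmul, map_tactR_aux f hmul, hfq]
  · intro b
    obtain ⟨a, rfl⟩ := hsurj b
    have h0 : Tendsto (fun i => ‖Q‖ * ‖tpi A (u i) * a - a‖) φ (𝓝 0) := by
      have := (hpi a).const_mul ‖Q‖
      simpa using this
    apply squeeze_zero (fun i => norm_nonneg _) _ h0
    intro i
    have : tpi B (TensorProduct.map f f (u i)) * q a - q a
        = f (tpi A (u i) * a - a) := by
      rw [map_tpi_aux f hmul, map_sub, hmul, hfq, hfq]
    rw [this]
    exact hQb _
end

section
/- If {A_γ : γ ∈ Γ} is a collection of pseudo-amenable Banach algebras, then the c₀-direct sum ⊕₀_{γ∈Γ} A_γ is pseudo-amenable. -/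
open Filter Topology TensorProduct

open scoped ENNReal

noncomputable section

variable (Gam : Type) (A : Gam → Type) [∀ g, NonUnitalNormedRing (A g)]
  [∀ g, NormedSpace ℂ (A g)] [∀ g, IsScalarTower ℂ (A g) (A g)]
  [∀ g, SMulCommClass ℂ (A g) (A g)] [∀ g, CompleteSpace (A g)]

/-- The c₀-direct sum of the family `A`: the families `(a_g)` with `‖a_g‖ → 0` along the
filter of cofinite subsets of `Gam`, with the sup norm and coordinatewise multiplication,
realized as a non-unital subalgebra of `lp A ∞`. -/
def c0Sum : NonUnitalSubalgebra ℂ (lp A ∞) where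
  carrier := {f | Tendsto (fun g => ‖f g‖) cofinite (𝓝 0)}
  zero_mem' := by
    have : Tendsto (fun _ : Gam => (0 : ℝ)) cofinite (𝓝 0) := tendsto_const_nhds
    simpa using this
  add_mem' := by
    intro f g hf hg
    refine squeeze_zero (fun x => norm_nonneg _) (fun x => ?_)
      (by simpa using hf.add hg)
    calc ‖(f + g) x‖ = ‖f x + g x‖ := by simp [lp.coeFn_add]
    _ ≤ ‖f x‖ + ‖g x‖ := norm_add_le _ _
  smul_mem' := by
    intro c f hf
    refine squeeze_zero (fun x => norm_nonneg _) (fun x => ?_)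
      (by simpa using hf.const_mul ‖c‖)
    calc ‖(c • f) x‖ = ‖c • f x‖ := by simp [lp.coeFn_smul]
    _ ≤ ‖c‖ * ‖f x‖ := by rw [norm_smul]
  mul_mem' := by
    intro f g hf hg
    refine squeeze_zero (fun x => norm_nonneg _) (fun x => ?_)
      (by simpa using hf.mul_const ‖g‖)
    calc ‖(f * g) x‖ = ‖f x * g x‖ := by simp [lp.infty_coeFn_mul]
    _ ≤ ‖f x‖ * ‖g x‖ := norm_mul_le _ _
    _ ≤ ‖f x‖ * ‖g‖ := by
        exact mul_le_mul_of_nonneg_left (lp.norm_apply_le_norm (by norm_num) g x) (norm_nonneg _)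

set_option maxHeartbeats 1600000
set_option synthInstance.maxHeartbeats 800000

/-! ### Auxiliary material on the projective tensor seminorm -/

section ProjAux

variable {V W : Type} [AddCommGroup V] [Module ℂ V] [AddCommGroup W] [Module ℂ W]

/-- Sum of the pure tensors listed in `L`. -/
def sumT (L : List (V × W)) : V ⊗[ℂ] W := (L.map fun p => p.1 ⊗ₜ[ℂ] p.2).sum

/-- Value of the representation `L`. -/
def valT (να : V → ℝ) (νβ : W → ℝ) (L : List (V × W)) : ℝ :=
  (L.map fun p => να p.1 * νβ p.2).sum

lemma projTensorSN_eq (να : V → ℝ) (νβ : W → ℝ) (t : V ⊗[ℂ] W) :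
    projTensorSN να νβ t = sInf {r : ℝ | ∃ L : List (V × W), t = sumT L ∧ r = valT να νβ L} :=
  rfl

lemma exists_rep (t : V ⊗[ℂ] W) : ∃ L : List (V × W), t = sumT L := by
  induction t with
  | zero => exact ⟨[], by simp [sumT]⟩
  | tmul x y => exact ⟨[(x, y)], by simp [sumT]⟩
  | add x y hx hy =>
    obtain ⟨L1, h1⟩ := hx
    obtain ⟨L2, h2⟩ := hy
    exact ⟨L1 ++ L2, by simp [sumT, h1, h2]⟩

lemma sumT_map {V' W' : Type} [AddCommGroup V'] [Module ℂ V'] [AddCommGroup W'] [Module ℂ W']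
    (f : V →ₗ[ℂ] V') (g : W →ₗ[ℂ] W') (L : List (V × W)) :
    TensorProduct.map f g (sumT L) = sumT (L.map fun p => (f p.1, g p.2)) := by
  induction L with
  | nil => simp [sumT]
  | cons p L ih => simp only [sumT, List.map_cons, List.sum_cons, map_add] at ih ⊢
                   rw [ih, TensorProduct.map_tmul]

variable {να : V → ℝ} {νβ : W → ℝ}

lemma valT_nonneg (hα : ∀ v, 0 ≤ να v) (hβ : ∀ w, 0 ≤ νβ w) (L : List (V × W)) :
    0 ≤ valT να νβ L := by
  refine List.sum_nonneg ?_
  intro x hx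
  simp only [List.mem_map] at hx
  obtain ⟨p, -, rfl⟩ := hx
  exact mul_nonneg (hα _) (hβ _)

lemma bddBelow_repSet (hα : ∀ v, 0 ≤ να v) (hβ : ∀ w, 0 ≤ νβ w) (t : V ⊗[ℂ] W) :
    BddBelow {r : ℝ | ∃ L : List (V × W), t = sumT L ∧ r = valT να νβ L} := by
  refine ⟨0, fun r hr => ?_⟩
  obtain ⟨L, -, rfl⟩ := hr
  exact valT_nonneg hα hβ L

lemma projTensorSN_le_valT (hα : ∀ v, 0 ≤ να v) (hβ : ∀ w, 0 ≤ νβ w) {t : V ⊗[ℂ] W}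
    {L : List (V × W)} (hL : t = sumT L) : projTensorSN να νβ t ≤ valT να νβ L := by
  rw [projTensorSN_eq]
  exact csInf_le (bddBelow_repSet hα hβ t) ⟨L, hL, rfl⟩

lemma projTensorSN_nonneg (hα : ∀ v, 0 ≤ να v) (hβ : ∀ w, 0 ≤ νβ w) (t : V ⊗[ℂ] W) :
    0 ≤ projTensorSN να νβ t := by
  rw [projTensorSN_eq]
  refine Real.sInf_nonneg ?_
  rintro r ⟨L, -, rfl⟩
  exact valT_nonneg hα hβ L

lemma exists_rep_lt (hα : ∀ v, 0 ≤ να v) (hβ : ∀ w, 0 ≤ νβ w) {t : V ⊗[ℂ] W} {r : ℝ}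
    (h : projTensorSN να νβ t < r) : ∃ L, t = sumT L ∧ valT να νβ L < r := by
  rw [projTensorSN_eq] at h
  obtain ⟨L0, hL0⟩ := exists_rep t
  have hne : {r : ℝ | ∃ L : List (V × W), t = sumT L ∧ r = valT να νβ L}.Nonempty :=
    ⟨valT να νβ L0, L0, hL0, rfl⟩
  obtain ⟨b, ⟨L, hL, rfl⟩, hb⟩ := (csInf_lt_iff (bddBelow_repSet hα hβ t) hne).1 h
  exact ⟨L, hL, hb⟩

lemma rep_finset_sum {k : Type} (F : Finset k) (t : k → V ⊗[ℂ] W) (r : k → ℝ)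
    (h : ∀ g ∈ F, ∃ L, t g = sumT L ∧ valT να νβ L ≤ r g) :
    ∃ L, (∑ g ∈ F, t g) = sumT L ∧ valT να νβ L ≤ ∑ g ∈ F, r g := by
  classical
  induction F using Finset.cons_induction with
  | empty => exact ⟨[], by simp [sumT], by simp [valT]⟩
  | cons a F ha ih =>
    obtain ⟨L1, hL1, hv1⟩ := h a (Finset.mem_cons_self a F)
    obtain ⟨L2, hL2, hv2⟩ := ih fun g hg => h g (Finset.mem_cons_of_mem hg)
    refine ⟨L1 ++ L2, ?_, ?_⟩
    · rw [Finset.sum_cons, hL1, hL2]; simp [sumT]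
    · rw [Finset.sum_cons]
      calc valT να νβ (L1 ++ L2) = valT να νβ L1 + valT να νβ L2 := by simp [valT]
      _ ≤ r a + ∑ g ∈ F, r g := add_le_add hv1 hv2

end ProjAux

/-! ### Simultaneous approximation from pseudo-amenability -/

lemma pseudo_finite {C : Type} [NonUnitalRing C] [Module ℂ C] [IsScalarTower ℂ C C]
    [SMulCommClass ℂ C C] {ν : C → ℝ} (h : PseudoAmenableSN C ν)
    {k : Type} (t : Finset k) (f : k → C) {ε : ℝ} (hε : 0 < ε) :
    ∃ u : C ⊗[ℂ] C, ∀ j ∈ t,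
      projTensorSN ν ν (tactL C (f j) u - tactR C (f j) u) < ε ∧
      ν (tpi C u * f j - f j) < ε := by
  obtain ⟨ι, φ, u, hne, h1, h2⟩ := h
  have hev : ∀ᶠ i in φ, ∀ j ∈ t,
      projTensorSN ν ν (tactL C (f j) (u i) - tactR C (f j) (u i)) < ε ∧
      ν (tpi C (u i) * f j - f j) < ε := by
    refine (Filter.eventually_all_finset t).2 fun j _ => ?_
    exact ((h1 (f j)).eventually_lt_const hε).and ((h2 (f j)).eventually_lt_const hε)
  obtain ⟨i, hi⟩ := hev.exists
  exact ⟨u i, hi⟩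

/-! ### The coordinate embeddings into the c₀-sum -/

section Emb

variable [DecidableEq Gam]

lemma single_mem_c0Sum (g : Gam) (x : A g) : lp.single ∞ g x ∈ c0Sum Gam A := by
  have hev : ∀ᶠ g' in (cofinite : Filter Gam), ‖lp.single ∞ g x g'‖ = 0 := by
    have hsub : {g' : Gam | ¬ ‖lp.single ∞ g x g'‖ = 0} ⊆ {g} := by
      intro g' hg'
      by_contra hne
      exact hg' (by rw [lp.single_apply_ne ∞ g x (by simpa using hne), norm_zero])
    exact Filter.eventually_cofinite.2 ((Set.finite_singleton g).subset hsub)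
  exact tendsto_const_nhds.congr' (by filter_upwards [hev] with g' h using h.symm)

/-- The coordinate embedding `A g → ⊕₀ A`. -/
def emb (g : Gam) : A g →ₗ[ℂ] ↥(c0Sum Gam A) where
  toFun x := ⟨lp.single ∞ g x, single_mem_c0Sum Gam A g x⟩
  map_add' x y := by
    refine Subtype.ext (lp.ext (funext fun j => ?_))
    by_cases hj : j = g
    · subst hj
      simp [lp.single_apply_self]
    · simp [lp.single_apply_ne ∞ g _ hj]
  map_smul' c x := by
    refine Subtype.ext (lp.ext (funext fun j => ?_))
    by_cases hj : j = g
    · subst hj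
      simp [lp.single_apply_self]
    · simp [lp.single_apply_ne ∞ g _ hj]

lemma coe_emb (g : Gam) (x : A g) :
    ((emb Gam A g x : ↥(c0Sum Gam A)) : lp A ∞) = lp.single ∞ g x := rfl

lemma norm_coe (b : ↥(c0Sum Gam A)) : ‖b‖ = ‖(b : lp A ∞)‖ := rfl

lemma norm_emb_le (g : Gam) (x : A g) : ‖emb Gam A g x‖ ≤ ‖x‖ := by
  rw [norm_coe, coe_emb]
  refine lp.norm_le_of_forall_le (norm_nonneg x) fun j => ?_
  by_cases hj : j = g
  · subst hj; rw [lp.single_apply_self]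
  · rw [lp.single_apply_ne ∞ g x hj, norm_zero]; exact norm_nonneg x

/-- The coordinate projection. -/
def coordL (g : Gam) : ↥(c0Sum Gam A) →ₗ[ℂ] A g where
  toFun b := (b : lp A ∞) g
  map_add' x y := by simp [lp.coeFn_add]
  map_smul' c x := by simp [lp.coeFn_smul]

lemma coordL_emb_self (g : Gam) (x : A g) : coordL Gam A g (emb Gam A g x) = x := by
  show ((emb Gam A g x : ↥(c0Sum Gam A)) : lp A ∞) g = x
  rw [coe_emb, lp.single_apply_self]

lemma coordL_emb_ne {g g' : Gam} (hg : g' ≠ g) (x : A g') :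
    coordL Gam A g (emb Gam A g' x) = 0 := by
  show ((emb Gam A g' x : ↥(c0Sum Gam A)) : lp A ∞) g = 0
  rw [coe_emb, lp.single_apply_ne ∞ g' x (Ne.symm hg)]

lemma mul_emb (a : ↥(c0Sum Gam A)) (g : Gam) (x : A g) :
    a * emb Gam A g x = emb Gam A g (coordL Gam A g a * x) := by
  refine Subtype.ext (lp.ext (funext fun j => ?_))
  have hmul : ((↑(a * emb Gam A g x) : lp A ∞)) j =
      (a : lp A ∞) j * (lp.single ∞ g x) j := by
    rw [show ((↑(a * emb Gam A g x) : lp A ∞)) = (a : lp A ∞) * (lp.single ∞ g x) from rfl]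
    simp [lp.infty_coeFn_mul]
  by_cases hj : j = g
  · subst hj
    rw [hmul, coe_emb, lp.single_apply_self, lp.single_apply_self]
    rfl
  · rw [hmul, coe_emb, lp.single_apply_ne ∞ g _ hj, lp.single_apply_ne ∞ g _ hj, mul_zero]

lemma emb_mul (a : ↥(c0Sum Gam A)) (g : Gam) (x : A g) :
    emb Gam A g x * a = emb Gam A g (x * coordL Gam A g a) := by
  refine Subtype.ext (lp.ext (funext fun j => ?_))
  have hmul : ((↑(emb Gam A g x * a) : lp A ∞)) j =
      (lp.single ∞ g x) j * (a : lp A ∞) j := by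
    rw [show ((↑(emb Gam A g x * a) : lp A ∞)) = (lp.single ∞ g x) * (a : lp A ∞) from rfl]
    simp [lp.infty_coeFn_mul]
  by_cases hj : j = g
  · subst hj
    rw [hmul, coe_emb, lp.single_apply_self, lp.single_apply_self]
    rfl
  · rw [hmul, coe_emb, lp.single_apply_ne ∞ g _ hj, lp.single_apply_ne ∞ g _ hj, zero_mul]

/-- The tensor square of the coordinate embedding. -/
def embT (g : Gam) : A g ⊗[ℂ] A g →ₗ[ℂ] (↥(c0Sum Gam A)) ⊗[ℂ] ↥(c0Sum Gam A) :=
  TensorProduct.map (emb Gam A g) (emb Gam A g)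

lemma tactL_embT (a : ↥(c0Sum Gam A)) (g : Gam) (v : A g ⊗[ℂ] A g) :
    tactL (↥(c0Sum Gam A)) a (embT Gam A g v) =
      embT Gam A g (tactL (A g) (coordL Gam A g a) v) := by
  have : (tactL (↥(c0Sum Gam A)) a).comp (embT Gam A g) =
      (embT Gam A g).comp (tactL (A g) (coordL Gam A g a)) := by
    refine TensorProduct.ext' fun x y => ?_
    simp [tactL, embT, mul_emb]
  exact LinearMap.congr_fun this v

lemma tactR_embT (a : ↥(c0Sum Gam A)) (g : Gam) (v : A g ⊗[ℂ] A g) :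
    tactR (↥(c0Sum Gam A)) a (embT Gam A g v) =
      embT Gam A g (tactR (A g) (coordL Gam A g a) v) := by
  have : (tactR (↥(c0Sum Gam A)) a).comp (embT Gam A g) =
      (embT Gam A g).comp (tactR (A g) (coordL Gam A g a)) := by
    refine TensorProduct.ext' fun x y => ?_
    simp [tactR, embT, emb_mul]
  exact LinearMap.congr_fun this v

lemma tpi_embT (g : Gam) (v : A g ⊗[ℂ] A g) :
    tpi (↥(c0Sum Gam A)) (embT Gam A g v) = emb Gam A g (tpi (A g) v) := by
  have : (tpi (↥(c0Sum Gam A))).comp (embT Gam A g) = (emb Gam A g).comp (tpi (A g)) := by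
    refine TensorProduct.ext' fun x y => ?_
    simp only [LinearMap.comp_apply, embT, TensorProduct.map_tmul, tpi, LinearMap.mul'_apply]
    rw [emb_mul, coordL_emb_self]
  exact LinearMap.congr_fun this v

lemma projTensorSN_embT_le (g : Gam) (v : A g ⊗[ℂ] A g) :
    projTensorSN (fun x : ↥(c0Sum Gam A) => ‖x‖) (fun x : ↥(c0Sum Gam A) => ‖x‖)
      (embT Gam A g v) ≤
    projTensorSN (fun x : A g => ‖x‖) (fun x : A g => ‖x‖) v := by
  have hne : {r : ℝ | ∃ L : List (A g × A g), v = sumT L ∧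
      r = valT (fun x : A g => ‖x‖) (fun x : A g => ‖x‖) L}.Nonempty := by
    obtain ⟨L, hL⟩ := exists_rep v
    exact ⟨_, L, hL, rfl⟩
  rw [projTensorSN_eq (fun x : A g => ‖x‖) (fun x : A g => ‖x‖) v]
  refine le_csInf hne ?_
  rintro r ⟨L, hL, rfl⟩
  have hrep : embT Gam A g v =
      sumT (L.map fun p => (emb Gam A g p.1, emb Gam A g p.2)) := by
    rw [hL]; exact sumT_map (emb Gam A g) (emb Gam A g) L
  refine (projTensorSN_le_valT (fun x => norm_nonneg x) (fun x => norm_nonneg x) hrep).trans ?_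
  simp only [valT, List.map_map]
  refine List.sum_le_sum fun p _ => ?_
  exact mul_le_mul (norm_emb_le Gam A g p.1) (norm_emb_le Gam A g p.2) (norm_nonneg _)
    (norm_nonneg _)

end Emb

/-! ### Picking the tail finset -/

lemma tail_finset (s : Finset ↥(c0Sum Gam A)) {ε : ℝ} (hε : 0 < ε) :
    ∃ F : Finset Gam, ∀ g ∉ F, ∀ a ∈ s, ‖((a : ↥(c0Sum Gam A)) : lp A ∞) g‖ ≤ ε := by
  classical
  have hev : ∀ᶠ g in (cofinite : Filter Gam),
      ∀ a ∈ s, ‖((a : ↥(c0Sum Gam A)) : lp A ∞) g‖ ≤ ε := by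
    refine (Filter.eventually_all_finset s).2 fun a _ => ?_
    have ha : Tendsto (fun g => ‖((a : ↥(c0Sum Gam A)) : lp A ∞) g‖) cofinite (𝓝 0) := a.2
    filter_upwards [ha.eventually_lt_const hε] with g hg using hg.le
  rw [Filter.eventually_cofinite] at hev
  exact ⟨hev.toFinset, fun g hg => by simpa using fun h => hg (hev.mem_toFinset.2 h)⟩

/-! ### The key finite approximation lemma -/

lemma key_approx (h : ∀ g, PseudoAmenable (A g)) (s : Finset ↥(c0Sum Gam A))
    {ε : ℝ} (hε : 0 < ε) :
    ∃ u : (↥(c0Sum Gam A)) ⊗[ℂ] ↥(c0Sum Gam A), ∀ a ∈ s,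
      projTensorSN (fun x : ↥(c0Sum Gam A) => ‖x‖) (fun x : ↥(c0Sum Gam A) => ‖x‖)
        (tactL (↥(c0Sum Gam A)) a u - tactR (↥(c0Sum Gam A)) a u) < ε ∧
      ‖tpi (↥(c0Sum Gam A)) u * a - a‖ < ε := by
  classical
  obtain ⟨F, hF⟩ := tail_finset Gam A s (half_pos hε)
  set δ : ℝ := min (ε / (F.card + 1)) (ε / 2) with hδdef
  have hδpos : 0 < δ := lt_min (div_pos hε (by positivity)) (half_pos hε)
  -- choose approximate diagonals in each coordinate
  have hch : ∀ g : Gam, ∃ w : A g ⊗[ℂ] A g, ∀ a ∈ s,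
      projTensorSN (fun x : A g => ‖x‖) (fun x : A g => ‖x‖)
        (tactL (A g) (coordL Gam A g a) w - tactR (A g) (coordL Gam A g a) w) < δ ∧
      ‖tpi (A g) w * (coordL Gam A g a) - (coordL Gam A g a)‖ < δ := fun g =>
    pseudo_finite (h g) s (fun a => coordL Gam A g a) hδpos
  choose w hw using hch
  refine ⟨∑ g ∈ F, embT Gam A g (w g), fun a ha => ?_⟩
  constructor
  · -- the commutator estimate
    have hdiff : tactL (↥(c0Sum Gam A)) a (∑ g ∈ F, embT Gam A g (w g)) -
        tactR (↥(c0Sum Gam A)) a (∑ g ∈ F, embT Gam A g (w g)) =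
        ∑ g ∈ F, embT Gam A g
          (tactL (A g) (coordL Gam A g a) (w g) - tactR (A g) (coordL Gam A g a) (w g)) := by
      have hterm : ∀ g ∈ F, embT Gam A g
          (tactL (A g) (coordL Gam A g a) (w g) - tactR (A g) (coordL Gam A g a) (w g)) =
          tactL (↥(c0Sum Gam A)) a (embT Gam A g (w g)) -
            tactR (↥(c0Sum Gam A)) a (embT Gam A g (w g)) := by
        intro g _
        rw [map_sub, tactL_embT, tactR_embT]
      rw [map_sum, map_sum, Finset.sum_congr rfl hterm]
      exact (Finset.sum_sub_distrib
        (f := fun g => tactL (↥(c0Sum Gam A)) a (embT Gam A g (w g)))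
        (g := fun g => tactR (↥(c0Sum Gam A)) a (embT Gam A g (w g)))).symm
    rw [hdiff]
    have hrep : ∀ g ∈ F, ∃ L, embT Gam A g
        (tactL (A g) (coordL Gam A g a) (w g) - tactR (A g) (coordL Gam A g a) (w g)) = sumT L ∧
        valT (fun x : ↥(c0Sum Gam A) => ‖x‖) (fun x : ↥(c0Sum Gam A) => ‖x‖) L ≤ δ := by
      intro g _
      have h1 := (hw g a ha).1
      have h2 : projTensorSN (fun x : ↥(c0Sum Gam A) => ‖x‖) (fun x : ↥(c0Sum Gam A) => ‖x‖)
          (embT Gam A g (tactL (A g) (coordL Gam A g a) (w g) -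
            tactR (A g) (coordL Gam A g a) (w g))) < δ :=
        lt_of_le_of_lt (projTensorSN_embT_le Gam A g _) h1
      obtain ⟨L, hL, hv⟩ := exists_rep_lt (fun x => norm_nonneg x) (fun x => norm_nonneg x) h2
      exact ⟨L, hL, hv.le⟩
    obtain ⟨L, hL, hv⟩ := rep_finset_sum F _ (fun _ => δ) hrep
    refine lt_of_le_of_lt
      ((projTensorSN_le_valT (fun x => norm_nonneg x) (fun x => norm_nonneg x) hL).trans hv) ?_
    rw [Finset.sum_const, nsmul_eq_mul]
    calc (F.card : ℝ) * δ ≤ (F.card : ℝ) * (ε / (F.card + 1)) :=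
          mul_le_mul_of_nonneg_left (min_le_left _ _) (by positivity)
    _ < (F.card + 1) * (ε / (F.card + 1)) := by
          refine mul_lt_mul_of_pos_right (by linarith) (div_pos hε (by positivity))
    _ = ε := by field_simp
  · -- the approximate identity estimate
    have hpi : tpi (↥(c0Sum Gam A)) (∑ g ∈ F, embT Gam A g (w g)) * a - a =
        (∑ g ∈ F, emb Gam A g (tpi (A g) (w g) * coordL Gam A g a)) - a := by
      rw [map_sum, Finset.sum_mul]
      congr 1
      refine Finset.sum_congr rfl fun g _ => ?_
      rw [tpi_embT, emb_mul]
    rw [hpi, norm_coe]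
    refine lt_of_le_of_lt (lp.norm_le_of_forall_le (le_of_lt (half_pos hε)) fun j => ?_)
      (half_lt_self hε)
    have hco : ((↑((∑ g ∈ F, emb Gam A g (tpi (A g) (w g) * coordL Gam A g a)) - a) :
        lp A ∞)) j = coordL Gam A j ((∑ g ∈ F, emb Gam A g (tpi (A g) (w g) * coordL Gam A g a)) - a) := rfl
    rw [hco, map_sub, map_sum]
    by_cases hj : j ∈ F
    · have hsum : (∑ g ∈ F, coordL Gam A j (emb Gam A g (tpi (A g) (w g) * coordL Gam A g a))) =
          tpi (A j) (w j) * coordL Gam A j a := by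
        rw [Finset.sum_eq_single_of_mem j hj]
        · rw [coordL_emb_self]
        · intro g _ hg
          exact coordL_emb_ne Gam A hg _
      rw [hsum]
      exact ((hw j a ha).2.le).trans (min_le_right _ _)
    · have hsum : (∑ g ∈ F, coordL Gam A j (emb Gam A g (tpi (A g) (w g) * coordL Gam A g a))) =
          0 := by
        refine Finset.sum_eq_zero fun g hg => ?_
        exact coordL_emb_ne Gam A (fun hgj => hj (by rw [← hgj]; exact hg)) _
      rw [hsum, zero_sub, norm_neg]
      exact hF j hj a ha

/-- If `{A_γ : γ ∈ Γ}` is a collection of pseudo-amenable Banach algebras, then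
the c₀-direct sum `⊕₀_{γ∈Γ} A_γ` is pseudo-amenable. -/
theorem pseudoAmenable_c0Sum (h : ∀ g, PseudoAmenable (A g)) :
    @PseudoAmenable ↥(c0Sum Gam A) _ (SubmoduleClass.toNormedSpace _) _ _ := by
  classical
  have hkey : ∀ i : Finset (↥(c0Sum Gam A)) × ℕ, ∃ u : (↥(c0Sum Gam A)) ⊗[ℂ] ↥(c0Sum Gam A), ∀ a ∈ i.1,
      projTensorSN (fun x : ↥(c0Sum Gam A) => ‖x‖) (fun x : ↥(c0Sum Gam A) => ‖x‖)
        (tactL (↥(c0Sum Gam A)) a u - tactR (↥(c0Sum Gam A)) a u) < 1 / (i.2 + 1) ∧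
      ‖tpi (↥(c0Sum Gam A)) u * a - a‖ < 1 / (i.2 + 1) := fun i =>
    key_approx Gam A h i.1 (by positivity)
  choose u hu using hkey
  refine ⟨Finset (↥(c0Sum Gam A)) × ℕ, atTop ×ˢ atTop, u, Filter.prod_neBot.2 ⟨atTop_neBot, atTop_neBot⟩,
    ?_, ?_⟩
  all_goals {
    intro a
    rw [tendsto_order]
    constructor
    · intro c hc
      refine Filter.Eventually.of_forall fun i => lt_of_lt_of_le hc ?_
      first
      | exact projTensorSN_nonneg (fun x => norm_nonneg x) (fun x => norm_nonneg x) _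
      | exact norm_nonneg _
    · intro c hc
      obtain ⟨N, hN⟩ := exists_nat_one_div_lt hc
      have h1 : ∀ᶠ i : Finset (↥(c0Sum Gam A)) × ℕ in atTop ×ˢ atTop, a ∈ i.1 ∧ N ≤ i.2 := by
        refine Filter.Eventually.and ?_ ?_
        · exact (Filter.eventually_ge_atTop ({a} : Finset ↥(c0Sum Gam A))).prod_inl atTop |>.mono
            (fun i hi => Finset.singleton_subset_iff.1 hi)
        · exact (Filter.eventually_ge_atTop N).prod_inr atTop
      filter_upwards [h1] with i hi
      have hbound := hu i a hi.1
      have hlt : 1 / ((i.2 : ℝ) + 1) ≤ 1 / ((N : ℝ) + 1) := by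
        apply one_div_le_one_div_of_le (by positivity)
        exact_mod_cast Nat.succ_le_succ hi.2
      first
      | exact lt_of_lt_of_le hbound.1 (hlt.trans hN.le)
      | exact lt_of_lt_of_le hbound.2 (hlt.trans hN.le)
  }

end
end

section
/- If A and B are boundedly pseudo-contractible Banach algebras, then the projective tensor product A ⊗̂ B is boundedly pseudo-contractible. -/
open Filter Topology TensorProduct

section AuxLemmas

open TensorProduct

/-! List helper lemmas -/

private lemma list_sum_map_le' {α : Type*} (L : List α) (f g : α → ℝ)
    (h : ∀ p ∈ L, f p ≤ g p) : (L.map f).sum ≤ (L.map g).sum := by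
  induction L with
  | nil => simp
  | cons p L ih =>
    simp only [List.map_cons, List.sum_cons]
    exact add_le_add (h p (by simp)) (ih fun q hq => h q (by simp [hq]))

private lemma list_sum_map_sub' {α M : Type*} [AddCommGroup M] (L : List α) (f g : α → M) :
    (L.map fun p => f p - g p).sum = (L.map f).sum - (L.map g).sum := by
  induction L with
  | nil => simp
  | cons p L ih => simp only [List.map_cons, List.sum_cons, ih]; abel

private lemma list_sum_map_const_mul' {α : Type*} (L : List α) (c : ℝ) (f : α → ℝ) :
    (L.map fun p => c * f p).sum = c * (L.map f).sum := by
  induction L with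
  | nil => simp
  | cons p L ih => simp only [List.map_cons, List.sum_cons, ih, mul_add]

private lemma mul_list_sum' {C : Type*} [NonUnitalNonAssocSemiring C] {α : Type*}
    (x : C) (L : List α) (f : α → C) :
    x * (L.map f).sum = (L.map fun p => x * f p).sum := by
  induction L with
  | nil => simp
  | cons p L ih => simp only [List.map_cons, List.sum_cons, mul_add, ih]

/-! Properties of the projective tensor seminorm -/

section PTS

variable {V W : Type} [NormedAddCommGroup V] [NormedSpace ℂ V]
  [NormedAddCommGroup W] [NormedSpace ℂ W]

private def ptsSet (t : V ⊗[ℂ] W) : Set ℝ :=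
  {r : ℝ | ∃ L : List (V × W), t = (L.map fun p => p.1 ⊗ₜ[ℂ] p.2).sum ∧
      r = (L.map fun p => ‖p.1‖ * ‖p.2‖).sum}

private lemma projTensorSN_eq_sInf (t : V ⊗[ℂ] W) :
    projTensorSN (fun a : V => ‖a‖) (fun b : W => ‖b‖) t = sInf (ptsSet t) := rfl

private lemma exists_rep' (t : V ⊗[ℂ] W) :
    ∃ L : List (V × W), t = (L.map fun p => p.1 ⊗ₜ[ℂ] p.2).sum := by
  induction t using TensorProduct.induction_on with
  | zero => exact ⟨[], by simp⟩
  | tmul x y => exact ⟨[(x, y)], by simp⟩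
  | add s t hs ht =>
    obtain ⟨L1, h1⟩ := hs; obtain ⟨L2, h2⟩ := ht
    exact ⟨L1 ++ L2, by simp [h1, h2]⟩

private lemma ptsSet_nonempty (t : V ⊗[ℂ] W) : (ptsSet t).Nonempty := by
  obtain ⟨L, hL⟩ := exists_rep' t
  exact ⟨_, L, hL, rfl⟩

private lemma ptsSet_nonneg {t : V ⊗[ℂ] W} {r : ℝ} (hr : r ∈ ptsSet t) : 0 ≤ r := by
  obtain ⟨L, -, rfl⟩ := hr
  refine List.sum_nonneg fun x hx => ?_
  obtain ⟨p, -, rfl⟩ := List.mem_map.mp hx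
  positivity

private lemma ptsSet_bddBelow (t : V ⊗[ℂ] W) : BddBelow (ptsSet t) :=
  ⟨0, fun _ hr => ptsSet_nonneg hr⟩

private lemma pts_nonneg (t : V ⊗[ℂ] W) :
    0 ≤ projTensorSN (fun a : V => ‖a‖) (fun b : W => ‖b‖) t := by
  rw [projTensorSN_eq_sInf]
  exact Real.sInf_nonneg fun _ hr => ptsSet_nonneg hr

private lemma pts_le_of_rep (t : V ⊗[ℂ] W) (L : List (V × W))
    (h : t = (L.map fun p => p.1 ⊗ₜ[ℂ] p.2).sum) :
    projTensorSN (fun a : V => ‖a‖) (fun b : W => ‖b‖) t ≤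
      (L.map fun p => ‖p.1‖ * ‖p.2‖).sum := by
  rw [projTensorSN_eq_sInf]
  exact csInf_le (ptsSet_bddBelow t) ⟨L, h, rfl⟩

private lemma pts_tmul_le (x : V) (y : W) :
    projTensorSN (fun a : V => ‖a‖) (fun b : W => ‖b‖) (x ⊗ₜ[ℂ] y) ≤ ‖x‖ * ‖y‖ := by
  simpa using pts_le_of_rep (x ⊗ₜ[ℂ] y) [(x, y)] (by simp)

private lemma pts_zero :
    projTensorSN (fun a : V => ‖a‖) (fun b : W => ‖b‖) (0 : V ⊗[ℂ] W) = 0 := by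
  refine le_antisymm ?_ (pts_nonneg 0)
  simpa using pts_le_of_rep (0 : V ⊗[ℂ] W) [] (by simp)

private lemma pts_add_le (s t : V ⊗[ℂ] W) :
    projTensorSN (fun a : V => ‖a‖) (fun b : W => ‖b‖) (s + t) ≤
      projTensorSN (fun a : V => ‖a‖) (fun b : W => ‖b‖) s +
      projTensorSN (fun a : V => ‖a‖) (fun b : W => ‖b‖) t := by
  set ν := projTensorSN (fun a : V => ‖a‖) (fun b : W => ‖b‖)
  have h1 : ∀ r1 ∈ ptsSet s, ∀ r2 ∈ ptsSet t, ν (s + t) ≤ r1 + r2 := by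
    rintro r1 ⟨L1, hL1, rfl⟩ r2 ⟨L2, hL2, rfl⟩
    have : ν (s + t) ≤ ((L1 ++ L2).map fun p => ‖p.1‖ * ‖p.2‖).sum :=
      pts_le_of_rep _ (L1 ++ L2) (by simp [hL1, hL2])
    simpa using this
  have h2 : ∀ r2 ∈ ptsSet t, ν (s + t) - r2 ≤ ν s := by
    intro r2 hr2
    rw [show ν s = sInf (ptsSet s) from rfl]
    exact le_csInf (ptsSet_nonempty s) fun r1 hr1 => by linarith [h1 r1 hr1 r2 hr2]
  have h3 : ν (s + t) - ν s ≤ ν t := by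
    rw [show ν t = sInf (ptsSet t) from rfl]
    exact le_csInf (ptsSet_nonempty t) fun r2 hr2 => by linarith [h2 r2 hr2]
  linarith

private lemma pts_listsum_le (l : List (V ⊗[ℂ] W)) :
    projTensorSN (fun a : V => ‖a‖) (fun b : W => ‖b‖) l.sum ≤
      (l.map (projTensorSN (fun a : V => ‖a‖) (fun b : W => ‖b‖))).sum := by
  induction l with
  | nil => simp [pts_zero]
  | cons x l ih =>
    simp only [List.sum_cons, List.map_cons]
    exact le_trans (pts_add_le x l.sum) (by linarith)

private lemma pts_map_le (g : V →ₗ[ℂ] V) (h : W →ₗ[ℂ] W) {K1 K2 : ℝ}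
    (hK1 : 0 < K1) (hK2 : 0 < K2)
    (hg : ∀ x, ‖g x‖ ≤ K1 * ‖x‖) (hh : ∀ y, ‖h y‖ ≤ K2 * ‖y‖) (t : V ⊗[ℂ] W) :
    projTensorSN (fun a : V => ‖a‖) (fun b : W => ‖b‖) (TensorProduct.map g h t) ≤
      K1 * K2 * projTensorSN (fun a : V => ‖a‖) (fun b : W => ‖b‖) t := by
  set ν := projTensorSN (fun a : V => ‖a‖) (fun b : W => ‖b‖)
  have key : ∀ r ∈ ptsSet t, ν (TensorProduct.map g h t) ≤ K1 * K2 * r := by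
    rintro r ⟨L, hL, rfl⟩
    have hrep : TensorProduct.map g h t =
        ((L.map fun p => (g p.1, h p.2)).map fun p => p.1 ⊗ₜ[ℂ] p.2).sum := by
      rw [hL, map_list_sum]
      simp [List.map_map, Function.comp_def]
    refine le_trans (pts_le_of_rep _ _ hrep) ?_
    rw [List.map_map]
    refine le_trans (list_sum_map_le' L _ (fun p => K1 * K2 * (‖p.1‖ * ‖p.2‖))
      (fun p _ => ?_)) ?_
    · calc ‖g p.1‖ * ‖h p.2‖ ≤ (K1 * ‖p.1‖) * (K2 * ‖p.2‖) :=
          mul_le_mul (hg _) (hh _) (norm_nonneg _) (by positivity)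
        _ = K1 * K2 * (‖p.1‖ * ‖p.2‖) := by ring
    · rw [list_sum_map_const_mul']
  have hK : (0 : ℝ) < K1 * K2 := by positivity
  have hdiv : ν (TensorProduct.map g h t) / (K1 * K2) ≤ ν t := by
    rw [show ν t = sInf (ptsSet t) from rfl]
    refine le_csInf (ptsSet_nonempty t) fun r hr => ?_
    rw [div_le_iff₀ hK]
    calc ν (TensorProduct.map g h t) ≤ K1 * K2 * r := key r hr
      _ = r * (K1 * K2) := by ring
  have := (div_le_iff₀ hK).mp hdiv
  linarith

end PTS

/-! Key tensor identities -/

section TensorKeys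

variable {A B : Type} [NonUnitalNormedRing A] [NormedSpace ℂ A]
  [IsScalarTower ℂ A A] [SMulCommClass ℂ A A]
  [NonUnitalNormedRing B] [NormedSpace ℂ B]
  [IsScalarTower ℂ B B] [SMulCommClass ℂ B B]

private noncomputable def tttL : (A ⊗[ℂ] A) ⊗[ℂ] (B ⊗[ℂ] B) →ₗ[ℂ] (A ⊗[ℂ] B) ⊗[ℂ] (A ⊗[ℂ] B) :=
  (TensorProduct.tensorTensorTensorComm ℂ A A B B).toLinearMap

private lemma tttL_tmul (x y : A) (p q : B) :
    tttL ((x ⊗ₜ[ℂ] y) ⊗ₜ[ℂ] (p ⊗ₜ[ℂ] q)) = (x ⊗ₜ[ℂ] p) ⊗ₜ[ℂ] (y ⊗ₜ[ℂ] q) := rfl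

private lemma tpi_ttt (u : A ⊗[ℂ] A) (v : B ⊗[ℂ] B) :
    tpi (A ⊗[ℂ] B) (tttL (u ⊗ₜ[ℂ] v)) = tpi A u ⊗ₜ[ℂ] tpi B v := by
  induction u using TensorProduct.induction_on with
  | zero => simp [tpi]
  | tmul x y =>
    induction v using TensorProduct.induction_on with
    | zero => simp [tpi]
    | tmul p q => simp [tpi, tttL_tmul]
    | add v1 v2 h1 h2 => rw [tmul_add, map_add, map_add, h1, h2, map_add, tmul_add]
  | add u1 u2 h1 h2 => rw [add_tmul, map_add, map_add, h1, h2, map_add, add_tmul]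

private lemma tactL_ttt (a : A) (b : B) (u : A ⊗[ℂ] A) (v : B ⊗[ℂ] B) :
    tactL (A ⊗[ℂ] B) (a ⊗ₜ[ℂ] b) (tttL (u ⊗ₜ[ℂ] v)) =
      tttL (tactL A a u ⊗ₜ[ℂ] tactL B b v) := by
  induction u using TensorProduct.induction_on with
  | zero => simp [tactL]
  | tmul x y =>
    induction v using TensorProduct.induction_on with
    | zero => simp [tactL]
    | tmul p q => simp [tactL, tttL_tmul]
    | add v1 v2 h1 h2 =>
      rw [tmul_add, map_add, map_add, h1, h2, ← map_add, ← tmul_add]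
      congr 2
      exact (map_add (tactL B b) v1 v2).symm
  | add u1 u2 h1 h2 =>
    rw [add_tmul, map_add, map_add, h1, h2, ← map_add, ← add_tmul]
    congr 2
    exact (map_add (tactL A a) u1 u2).symm

private lemma tactR_ttt (a : A) (b : B) (u : A ⊗[ℂ] A) (v : B ⊗[ℂ] B) :
    tactR (A ⊗[ℂ] B) (a ⊗ₜ[ℂ] b) (tttL (u ⊗ₜ[ℂ] v)) =
      tttL (tactR A a u ⊗ₜ[ℂ] tactR B b v) := by
  induction u using TensorProduct.induction_on with
  | zero => simp [tactR]
  | tmul x y =>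
    induction v using TensorProduct.induction_on with
    | zero => simp [tactR]
    | tmul p q => simp [tactR, tttL_tmul]
    | add v1 v2 h1 h2 =>
      rw [tmul_add, map_add, map_add, h1, h2, ← map_add, ← tmul_add]
      congr 2
      exact (map_add (tactR B b) v1 v2).symm
  | add u1 u2 h1 h2 =>
    rw [add_tmul, map_add, map_add, h1, h2, ← map_add, ← add_tmul]
    congr 2
    exact (map_add (tactR A a) u1 u2).symm

end TensorKeys

section TactAdd

variable {C : Type} [NonUnitalRing C] [Module ℂ C] [IsScalarTower ℂ C C] [SMulCommClass ℂ C C]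

private lemma tactL_zero' : tactL C 0 = 0 := by
  unfold tactL
  rw [show LinearMap.mulLeft ℂ (0 : C) = 0 by ext x; simp]
  exact TensorProduct.map_zero_left _

private lemma tactR_zero' : tactR C 0 = 0 := by
  unfold tactR
  rw [show LinearMap.mulRight ℂ (0 : C) = 0 by ext x; simp]
  exact TensorProduct.map_zero_right _

private lemma tactL_add' (c d : C) : tactL C (c + d) = tactL C c + tactL C d := by
  unfold tactL
  rw [show LinearMap.mulLeft ℂ (c + d) = LinearMap.mulLeft ℂ c + LinearMap.mulLeft ℂ d by
    ext x; simp [add_mul]]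
  exact TensorProduct.map_add_left _ _ _

private lemma tactR_add' (c d : C) : tactR C (c + d) = tactR C c + tactR C d := by
  unfold tactR
  rw [show LinearMap.mulRight ℂ (c + d) = LinearMap.mulRight ℂ c + LinearMap.mulRight ℂ d by
    ext x; simp [mul_add]]
  exact TensorProduct.map_add_right _ _ _

end TactAdd

end AuxLemmas

/-- If `A` and `B` are boundedly pseudo-contractible Banach algebras, then the
projective tensor product `A ⊗̂ B` is boundedly pseudo-contractible (where `A ⊗ B` carries
the projective tensor seminorm). -/
theorem bddPseudoContractible_tensor
    (A B : Type) [NonUnitalNormedRing A] [NormedSpace ℂ A]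
    [IsScalarTower ℂ A A] [SMulCommClass ℂ A A] [CompleteSpace A]
    [NonUnitalNormedRing B] [NormedSpace ℂ B]
    [IsScalarTower ℂ B B] [SMulCommClass ℂ B B] [CompleteSpace B]
    (hA : BddPseudoContractible A) (hB : BddPseudoContractible B) :
    BddPseudoContractibleSN (A ⊗[ℂ] B)
      (projTensorSN (fun a : A => ‖a‖) (fun b : B => ‖b‖)) := by
  unfold BddPseudoContractible BddPseudoContractibleSN at hA hB
  unfold BddPseudoContractibleSN
  obtain ⟨ιA, φA, u, hφA, hAc, hAl, KA, hKA0, hKAb⟩ := hA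
  obtain ⟨ιB, φB, v, hφB, hBc, hBl, KB, hKB0, hKBb⟩ := hB
  refine ⟨ιA × ιB, φA ×ˢ φB, fun i => tttL (u i.1 ⊗ₜ[ℂ] v i.2),
    Filter.prod_neBot.mpr ⟨hφA, hφB⟩, ?_, ?_, KA * KB, mul_pos hKA0 hKB0, ?_⟩
  · -- centrality
    intro c i
    induction c using TensorProduct.induction_on with
    | zero => rw [tactL_zero', tactR_zero']
    | tmul a b => rw [tactL_ttt, hAc a i.1, hBc b i.2, ← tactR_ttt]
    | add c1 c2 h1 h2 =>
      rw [tactL_add', tactR_add', LinearMap.add_apply, LinearMap.add_apply, h1, h2]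
  · -- convergence
    intro c
    obtain ⟨L, hL⟩ := exists_rep' c
    have hbound : ∀ i : ιA × ιB,
        projTensorSN (fun a : A => ‖a‖) (fun b : B => ‖b‖)
          (tpi (A ⊗[ℂ] B) (tttL (u i.1 ⊗ₜ[ℂ] v i.2)) * c - c) ≤
        (L.map fun p => ‖tpi A (u i.1) * p.1 - p.1‖ * (KB * ‖p.2‖)
          + ‖p.1‖ * ‖tpi B (v i.2) * p.2 - p.2‖).sum := by
      intro i
      have h1 : tpi (A ⊗[ℂ] B) (tttL (u i.1 ⊗ₜ[ℂ] v i.2)) * c - c =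
          (L.map fun p => (tpi A (u i.1) * p.1) ⊗ₜ[ℂ] (tpi B (v i.2) * p.2)
            - p.1 ⊗ₜ[ℂ] p.2).sum := by
        rw [tpi_ttt, hL, mul_list_sum', list_sum_map_sub']
        simp only [Algebra.TensorProduct.tmul_mul_tmul]
      rw [h1]
      refine le_trans (pts_listsum_le _) ?_
      rw [List.map_map]
      simp only [Function.comp_def]
      refine list_sum_map_le' L _ _ fun p _ => ?_
      have hdecomp : (tpi A (u i.1) * p.1) ⊗ₜ[ℂ] (tpi B (v i.2) * p.2) - p.1 ⊗ₜ[ℂ] p.2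
          = (tpi A (u i.1) * p.1 - p.1) ⊗ₜ[ℂ] (tpi B (v i.2) * p.2)
            + p.1 ⊗ₜ[ℂ] (tpi B (v i.2) * p.2 - p.2) := by
        rw [sub_tmul, tmul_sub]; abel
      rw [hdecomp]
      refine le_trans (pts_add_le _ _) (add_le_add ?_ ?_)
      · refine le_trans (pts_tmul_le _ _) ?_
        exact mul_le_mul_of_nonneg_left (hKBb i.2 p.2) (norm_nonneg _)
      · exact pts_tmul_le _ _
    refine squeeze_zero (fun i => pts_nonneg _) hbound ?_
    have h0 := tendsto_list_sum (f := fun (p : A × B) (i : ιA × ιB) =>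
        ‖tpi A (u i.1) * p.1 - p.1‖ * (KB * ‖p.2‖)
          + ‖p.1‖ * ‖tpi B (v i.2) * p.2 - p.2‖)
      (x := φA ×ˢ φB) (a := fun _ => (0 : ℝ)) L (fun p _ => ?_)
    · simpa using h0
    · have t1 := (((hAl p.1).comp tendsto_fst).mul_const (KB * ‖p.2‖) :
        Tendsto _ (φA ×ˢ φB) _)
      have t2 := (Filter.Tendsto.const_mul ‖p.1‖ ((hBl p.2).comp tendsto_snd) :
        Tendsto _ (φA ×ˢ φB) _)
      simpa using t1.add t2
  · -- multiplier bound
    intro i c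
    have hmulrep : tpi (A ⊗[ℂ] B) (tttL (u i.1 ⊗ₜ[ℂ] v i.2)) * c =
        TensorProduct.map (LinearMap.mulLeft ℂ (tpi A (u i.1)))
          (LinearMap.mulLeft ℂ (tpi B (v i.2))) c := by
      rw [tpi_ttt]
      induction c using TensorProduct.induction_on with
      | zero => simp
      | tmul a b => simp
      | add c1 c2 h1 h2 => rw [mul_add, h1, h2, map_add]
    rw [hmulrep]
    exact pts_map_le _ _ hKA0 hKB0
      (fun x => by simpa using hKAb i.1 x)
      (fun y => by simpa using hKBb i.2 y) c
end

section
/- If A is an approximately amenable Banach algebra, then A has a left approximate identity and a right approximate identity. -/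
open Filter Topology TensorProduct

/-! ### Auxiliary material for Statement 19 -/

section Aux19

variable {A : Type} [NonUnitalNormedRing A] [NormedSpace ℂ A]
  [IsScalarTower ℂ A A] [SMulCommClass ℂ A A]

/-- Build an approximate-identity-style net from the finite-subset approximation property. -/
lemma net_of_finset19 (g : A → A → A)
    (H : ∀ (F : Finset A) (ε : ℝ), 0 < ε → ∃ e : A, ∀ a ∈ F, ‖g a e - a‖ < ε) :
    ∃ (ι : Type) (φ : Filter ι) (e : ι → A), φ.NeBot ∧
      ∀ a : A, Tendsto (fun i => g a (e i)) φ (𝓝 a) := by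
  classical
  refine ⟨Finset A × ℕ, atTop, fun p => (H p.1 (1/(p.2+1)) (by positivity)).choose,
    atTop_neBot, fun a => ?_⟩
  rw [Metric.tendsto_nhds]
  intro ε hε
  obtain ⟨n, hn⟩ := exists_nat_one_div_lt hε
  rw [eventually_atTop]
  refine ⟨({a}, n), fun p hp => ?_⟩
  have h1 : a ∈ p.1 := hp.1 (Finset.mem_singleton_self a)
  have h2 := (H p.1 (1/(p.2+1)) (by positivity)).choose_spec a h1
  have h3 : (1 : ℝ)/(p.2+1) ≤ 1/(n+1) := by
    apply one_div_le_one_div_of_le (by positivity)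
    have := hp.2
    push_cast
    linarith [(Nat.cast_le (α := ℝ)).mpr this]
  rw [dist_eq_norm]
  linarith

/-- The double-dual-valued approximate innerness yields finite-subset approximation. -/
lemma core_approx19 {ι : Type} {fl : Filter ι} (hne : fl.NeBot)
    (ρ : A → (A →L[ℂ] A)) (Ψ : ι → ((A →L[ℂ] ℂ) →L[ℂ] ℂ))
    (hconv : ∀ a : A, Tendsto
      (fun i => (Ψ i).comp ((ContinuousLinearMap.compL ℂ A A ℂ).flip (ρ a)))
      fl (𝓝 (ContinuousLinearMap.apply ℂ ℂ a)))
    (F : Finset A) (ε : ℝ) (hε : 0 < ε) :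
    ∃ e : A, ∀ a ∈ F, ‖ρ a e - a‖ < ε := by
  classical
  set Lmap : A →L[ℂ] ((↥F) → A) := ContinuousLinearMap.pi (fun a => ρ (a : A)) with hLmap
  set x : (↥F) → A := fun a => (a : A) with hx
  set p : Submodule ℂ ((↥F) → A) := LinearMap.range (Lmap.toLinearMap) with hp
  set S : Submodule ℝ ((↥F) → A) := p.restrictScalars ℝ with hS
  have hxcl : x ∈ closure (S : Set ((↥F) → A)) := by
    by_contra hxc
    obtain ⟨f, u, hfu, hux⟩ :=
      geometric_hahn_banach_closed_point (S.convex.closure) isClosed_closure hxc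
    have hS0 : ∀ y ∈ S, f y = 0 := by
      intro y hy
      by_contra hfy
      have ht : ((u+1)/f y) • y ∈ S := S.smul_mem _ hy
      have h2 := hfu _ (subset_closure ht)
      rw [map_smul, smul_eq_mul, div_mul_cancel₀ _ hfy] at h2
      linarith
    have hu0 : 0 < u := by
      have := hfu 0 (subset_closure S.zero_mem)
      simpa using this
    set φC : ((↥F) → A) →L[ℂ] ℂ := f.extendTo𝕜' with hφC
    have hφS : ∀ y ∈ S, φC y = 0 := by
      intro y hy
      have h1 : f y = 0 := hS0 y hy
      have hIy : (RCLike.I : ℂ) • y ∈ S := by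
        rw [hS, Submodule.restrictScalars_mem] at hy ⊢
        exact p.smul_mem _ hy
      have h2 : f ((RCLike.I : ℂ) • y) = 0 := hS0 _ hIy
      rw [hφC, ContinuousLinearMap.extendTo𝕜', ContinuousLinearMap.extendTo𝕜'_apply, h1, h2]
      simp
    -- coordinate projections
    set sngl : (↥F) → (A →L[ℂ] ((↥F) → A)) := fun a =>
      ContinuousLinearMap.pi (fun b => if b = a then ContinuousLinearMap.id ℂ A else 0)
      with hsngl
    have hsngl_apply : ∀ (a : ↥F) (v : A) (b : ↥F),
        sngl a v b = if b = a then v else 0 := by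
      intro a v b
      have h0 : (sngl a v) b = (if b = a then ContinuousLinearMap.id ℂ A else 0) v := rfl
      rw [h0]
      split <;> simp
    have hdec : ∀ v : (↥F) → A, (∑ a : ↥F, sngl a (v a)) = v := by
      intro v
      funext b
      have h1 : ∀ a : ↥F, (sngl a (v a)) b = if b = a then v b else 0 := by
        intro a
        rw [hsngl_apply]
        split
        · rename_i hba; rw [hba]
        · rfl
      rw [Finset.sum_apply]
      simp only [h1]
      rw [Finset.sum_ite_eq]
      simp
    set φa : (↥F) → (A →L[ℂ] ℂ) := fun a => φC.comp (sngl a) with hφa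
    have hsplit : ∀ v : (↥F) → A, φC v = ∑ a : ↥F, φa a (v a) := by
      intro v
      conv_lhs => rw [← hdec v]
      rw [map_sum]
      rfl
    have hχ : (∑ a : ↥F, (φa a).comp (ρ (a : A))) = 0 := by
      ext e
      have h1 : φC (Lmap e) = 0 := by
        apply hφS
        rw [hS, Submodule.restrictScalars_mem, hp]
        exact ⟨e, rfl⟩
      have h2 := hsplit (Lmap e)
      rw [h1] at h2
      have h3 : ∀ a : ↥F, (Lmap e) a = ρ (a : A) e := fun a => rfl
      simp only [h3] at h2
      simpa using h2.symm
    -- choose a good index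
    set Sn : ℝ := ∑ a : ↥F, ‖φa a‖ with hSn
    have hSn0 : 0 ≤ Sn := Finset.sum_nonneg fun _ _ => norm_nonneg _
    set δ : ℝ := u / (Sn + 1) with hδdef
    have hδ : 0 < δ := by
      apply div_pos hu0
      linarith
    have hev : ∀ᶠ i in fl, ∀ a : ↥F,
        ‖(Ψ i).comp ((ContinuousLinearMap.compL ℂ A A ℂ).flip (ρ (a : A)))
          - ContinuousLinearMap.apply ℂ ℂ (a : A)‖ < δ := by
      rw [eventually_all]
      intro a
      have := (Metric.tendsto_nhds.mp (hconv (a : A))) δ hδ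
      simpa [dist_eq_norm] using this
    obtain ⟨i, hi⟩ := (hev.and (Filter.eventually_true fl)).exists
    have hi' := hi.1
    -- the estimate
    have key : ∀ a : ↥F, ‖φa a (a : A) - Ψ i ((φa a).comp (ρ (a : A)))‖ ≤ δ * ‖φa a‖ := by
      intro a
      have h1 : ((Ψ i).comp ((ContinuousLinearMap.compL ℂ A A ℂ).flip (ρ (a : A)))
          - ContinuousLinearMap.apply ℂ ℂ (a : A)) (φa a)
          = Ψ i ((φa a).comp (ρ (a : A))) - φa a (a : A) := by
        simp
      have h2 := ((Ψ i).comp ((ContinuousLinearMap.compL ℂ A A ℂ).flip (ρ (a : A)))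
          - ContinuousLinearMap.apply ℂ ℂ (a : A)).le_opNorm (φa a)
      rw [h1] at h2
      rw [← norm_neg]
      simp only [neg_sub]
      calc ‖Ψ i ((φa a).comp (ρ (a : A))) - φa a (a : A)‖
          ≤ ‖(Ψ i).comp ((ContinuousLinearMap.compL ℂ A A ℂ).flip (ρ (a : A)))
              - ContinuousLinearMap.apply ℂ ℂ (a : A)‖ * ‖φa a‖ := h2
        _ ≤ δ * ‖φa a‖ := mul_le_mul_of_nonneg_right (le_of_lt (hi' a)) (norm_nonneg _)
    have hsum0 : (∑ a : ↥F, Ψ i ((φa a).comp (ρ (a : A)))) = 0 := by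
      rw [← map_sum, hχ, map_zero]
    have hxval : φC x = ∑ a : ↥F, (φa a (a : A) - Ψ i ((φa a).comp (ρ (a : A)))) := by
      rw [Finset.sum_sub_distrib, hsum0, sub_zero, hsplit]
    have hnorm : ‖φC x‖ < u := by
      calc ‖φC x‖ = ‖∑ a : ↥F, (φa a (a : A) - Ψ i ((φa a).comp (ρ (a : A))))‖ := by
            rw [hxval]
        _ ≤ ∑ a : ↥F, ‖φa a (a : A) - Ψ i ((φa a).comp (ρ (a : A)))‖ :=
            norm_sum_le _ _
        _ ≤ ∑ a : ↥F, δ * ‖φa a‖ := Finset.sum_le_sum fun a _ => key a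
        _ = δ * Sn := by rw [← Finset.mul_sum]
        _ = u * (Sn / (Sn + 1)) := by rw [hδdef]; ring
        _ < u * 1 := by
            apply mul_lt_mul_of_pos_left _ hu0
            rw [div_lt_one (by linarith)]
            linarith
        _ = u := mul_one u
    have hre : (φC x).re = f x := by
      rw [hφC, ContinuousLinearMap.extendTo𝕜', ContinuousLinearMap.extendTo𝕜'_apply]
      simp [Complex.ext_iff]
    have : f x ≤ ‖φC x‖ := by
      rw [← hre]
      exact (Complex.re_le_norm _).trans (le_of_eq rfl)
    linarith
  obtain ⟨y, hyS, hdist⟩ := Metric.mem_closure_iff.mp hxcl ε hε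
  obtain ⟨e, he⟩ : ∃ e : A, Lmap e = y := by
    have := hyS
    rw [SetLike.mem_coe, hS, Submodule.restrictScalars_mem, hp] at this
    exact this
  refine ⟨e, fun a ha => ?_⟩
  have h1 := (dist_pi_lt_iff hε).mp hdist ⟨a, ha⟩
  have h2 : x ⟨a, ha⟩ = a := rfl
  have h3 : y ⟨a, ha⟩ = ρ a e := by rw [← he]; rfl
  rw [h2, h3, dist_eq_norm, norm_sub_rev] at h1
  exact h1

/-- The bimodule `A` with zero left action and right multiplication. -/
noncomputable def bimodR19 (A : Type) [NonUnitalNormedRing A] [NormedSpace ℂ A]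
    [IsScalarTower ℂ A A] [SMulCommClass ℂ A A] : BanachBimod A A where
  l _ := 0
  r a := (ContinuousLinearMap.mul ℂ A).flip a
  l_add _ _ := by simp
  l_smul _ _ := by simp
  r_add a b := map_add _ a b
  r_smul c a := map_smul _ c a
  l_bound := ⟨0, by simp⟩
  r_bound := ⟨‖(ContinuousLinearMap.mul ℂ A).flip‖, fun a =>
    (ContinuousLinearMap.mul ℂ A).flip.le_opNorm a⟩
  l_mul a b := by ext x; simp
  r_mul a b := by ext x; simp [mul_assoc]
  lr_comm a b := by ext x; simp

/-- The bimodule `A` with left multiplication and zero right action. -/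
noncomputable def bimodL19 (A : Type) [NonUnitalNormedRing A] [NormedSpace ℂ A]
    [IsScalarTower ℂ A A] [SMulCommClass ℂ A A] : BanachBimod A A where
  l a := ContinuousLinearMap.mul ℂ A a
  r _ := 0
  l_add a b := map_add _ a b
  l_smul c a := map_smul _ c a
  r_add _ _ := by simp
  r_smul _ _ := by simp
  l_bound := ⟨‖ContinuousLinearMap.mul ℂ A‖, fun a =>
    (ContinuousLinearMap.mul ℂ A).le_opNorm a⟩
  r_bound := ⟨0, by simp⟩
  l_mul a b := by ext x; simp [mul_assoc]
  r_mul a b := by ext x; simp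
  lr_comm a b := by ext x; simp

lemma dd_l_apply19 (M : BanachBimod A A) (c : A) (T : (A →L[ℂ] ℂ) →L[ℂ] ℂ)
    (φ : A →L[ℂ] ℂ) : (M.dual.dual.l c T) φ = T (φ.comp (M.l c)) := rfl

lemma dd_r_apply19 (M : BanachBimod A A) (c : A) (T : (A →L[ℂ] ℂ) →L[ℂ] ℂ)
    (φ : A →L[ℂ] ℂ) : (M.dual.dual.r c T) φ = T (φ.comp (M.r c)) := rfl

lemma bimodR19_l (a : A) : (bimodR19 A).l a = 0 := rfl
lemma bimodR19_r (a : A) : (bimodR19 A).r a = (ContinuousLinearMap.mul ℂ A).flip a := rfl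
lemma bimodL19_l (a : A) : (bimodL19 A).l a = ContinuousLinearMap.mul ℂ A a := rfl
lemma bimodL19_r (a : A) : (bimodL19 A).r a = 0 := rfl

lemma pre_apply19 (ρa : A →L[ℂ] A) (φ : A →L[ℂ] ℂ) :
    (ContinuousLinearMap.compL ℂ A A ℂ).flip ρa φ = φ.comp ρa := rfl

lemma app_apply19 (a : A) (φ : A →L[ℂ] ℂ) :
    ContinuousLinearMap.apply ℂ ℂ a φ = φ a := rfl

end Aux19

set_option maxHeartbeats 2000000 in
/-- If `A` is an approximately amenable Banach algebra, then `A` has a left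
approximate identity and a right approximate identity. -/
theorem approxAmenable_implies_left_and_right_approxIdentity
    (A : Type) [NonUnitalNormedRing A] [NormedSpace ℂ A]
    [IsScalarTower ℂ A A] [SMulCommClass ℂ A A] [CompleteSpace A]
    (h : ApproximatelyAmenable A) :
    HasLeftApproxIdentity A ∧ HasRightApproxIdentity A := by
  constructor
  · -- left approximate identity, via the bimodule with zero left action
    have hder : (bimodR19 A).dual.dual.IsDerivation (ContinuousLinearMap.apply ℂ ℂ) := by
      intro a b
      ext φ
      rw [ContinuousLinearMap.add_apply, dd_l_apply19, dd_r_apply19, bimodR19_l,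
        bimodR19_r, ContinuousLinearMap.comp_zero, map_zero, zero_add, app_apply19,
        app_apply19, ContinuousLinearMap.comp_apply]
      simp
    obtain ⟨ι, fl, Φ, hne, htend⟩ := h (A →L[ℂ] ℂ) inferInstance inferInstance
      (bimodR19 A).dual (ContinuousLinearMap.apply ℂ ℂ) hder
    have hconv : ∀ a : A, Tendsto
        (fun i => (-Φ i).comp
          ((ContinuousLinearMap.compL ℂ A A ℂ).flip ((ContinuousLinearMap.mul ℂ A).flip a)))
        fl (𝓝 (ContinuousLinearMap.apply ℂ ℂ a)) := by
      intro a
      refine (htend a).congr fun i => ?_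
      ext φ
      rw [ContinuousLinearMap.sub_apply, dd_l_apply19, dd_r_apply19, bimodR19_l,
        bimodR19_r, ContinuousLinearMap.comp_zero, map_zero, zero_sub,
        ContinuousLinearMap.comp_apply, ContinuousLinearMap.neg_apply, pre_apply19]
    obtain ⟨ι', fl', e, hne', hlim⟩ := net_of_finset19 (fun a e => e * a) (by
      intro F ε hε
      obtain ⟨e, he⟩ := core_approx19 hne _ (fun i => -Φ i) hconv F ε hε
      refine ⟨e, fun a ha => ?_⟩
      simpa using he a ha)
    exact ⟨ι', fl', e, hne', hlim⟩
  · -- right approximate identity, via the bimodule with zero right action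
    have hder : (bimodL19 A).dual.dual.IsDerivation (ContinuousLinearMap.apply ℂ ℂ) := by
      intro a b
      ext φ
      rw [ContinuousLinearMap.add_apply, dd_l_apply19, dd_r_apply19, bimodL19_l,
        bimodL19_r, ContinuousLinearMap.comp_zero, map_zero, add_zero, app_apply19,
        app_apply19, ContinuousLinearMap.comp_apply]
      simp
    obtain ⟨ι, fl, Φ, hne, htend⟩ := h (A →L[ℂ] ℂ) inferInstance inferInstance
      (bimodL19 A).dual (ContinuousLinearMap.apply ℂ ℂ) hder
    have hconv : ∀ a : A, Tendsto
        (fun i => (Φ i).comp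
          ((ContinuousLinearMap.compL ℂ A A ℂ).flip (ContinuousLinearMap.mul ℂ A a)))
        fl (𝓝 (ContinuousLinearMap.apply ℂ ℂ a)) := by
      intro a
      refine (htend a).congr fun i => ?_
      ext φ
      rw [ContinuousLinearMap.sub_apply, dd_l_apply19, dd_r_apply19, bimodL19_l,
        bimodL19_r, ContinuousLinearMap.comp_zero, map_zero, sub_zero,
        ContinuousLinearMap.comp_apply, pre_apply19]
    obtain ⟨ι', fl', e, hne', hlim⟩ := net_of_finset19 (fun a e => a * e) (by
      intro F ε hε
      obtain ⟨e, he⟩ := core_approx19 hne _ Φ hconv F ε hε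
      refine ⟨e, fun a ha => ?_⟩
      simpa using he a ha)
    exact ⟨ι', fl', e, hne', hlim⟩
end
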